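/- For a real number $q$ with $q > 0$ and $q \ne 1$, and for all positive integers $n$, $p$, $r$, $\sum_{\ell=1}^{n} q^{\ell-1}\, [\ell]_q^{(p)}\, H_{\ell}^{(r)}(q) = \Bigl(\sum_{m=1}^{p} s_{uq}(p,m) A_q(m,r,n)\Bigr) H_n^{(r)}(q) - \sum_{m=1}^{p} s_{uq}(p,m) B_q(m,r,n)$, where $[\ell]_q^{(p)} = [\ell]_q [\ell+1]_q \cdots [\ell+p-1]_q$, $s_{uq}(p,m)$ are the $q$-unsigned Stirling numbers of the first kind, $A_q(m,r,n) = \sum_{\ell=0}^{m} q^{\binom{\ell}{2}+\ell-1} S_q(m,\ell)\, [\ell]_q!\, \binom{n+r-1}{r-1}_q^{-1} \binom{r+\ell-1}{\ell}_q \binom{r+n}{r+\ell}_q$, and $B_q(m,r,n) = \sum_{\ell=0}^{m} \frac{q^{\binom{\ell}{2}+r+2\ell-2}}{[r+\ell]_q} S_q(m,\ell)\, [\ell]_q!\, \binom{r+\ell-1}{\ell}_q \binom{r+n-1}{r+\ell}_q$. -/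

import Mathlib

/-- The `q`-integer `[n]_q = (1 - q^n)/(1 - q)`. -/
noncomputable def qint (q : ℝ) (n : ℕ) : ℝ := (1 - q ^ n) / (1 - q)

/-- The `q`-factorial `[n]_q! = [n]_q [n-1]_q ⋯ [1]_q`, with `[0]_q! = 1`. -/
noncomputable def qfact (q : ℝ) : ℕ → ℝ
  | 0 => 1
  | n + 1 => qint q (n + 1) * qfact q n

/-- The `q`-binomial coefficient `C(n,k)_q = [n]_q!/([k]_q! [n-k]_q!)`, equal to `0` for `k > n`. -/
noncomputable def qbinom (q : ℝ) (n k : ℕ) : ℝ :=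
  if k ≤ n then qfact q n / (qfact q k * qfact q (n - k)) else 0

/-- The `q`-hyperharmonic numbers: `H_n^{(0)}(q) = 1/(q [n]_q)` and
`H_n^{(r)}(q) = ∑_{j=1}^n q^j H_j^{(r-1)}(q)` for `r ≥ 1` (so `H_0^{(r)}(q) = 0`). -/
noncomputable def qhyp (q : ℝ) : ℕ → ℕ → ℝ
  | 0, n => 1 / (q * qint q n)
  | r + 1, n => ∑ j ∈ Finset.Icc 1 n, q ^ j * qhyp q r j

/-- The `q`-Stirling numbers of the second kind, defined by the recurrence
`S_q(n+1, m) = S_q(n, m-1) + [m]_q S_q(n, m)` with `S_q(n,0) = S_q(0,n) = δ_{n,0}`. -/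
noncomputable def qS2 (q : ℝ) : ℕ → ℕ → ℝ
  | 0, 0 => 1
  | 0, _ + 1 => 0
  | _ + 1, 0 => 0
  | n + 1, m + 1 => qS2 q n m + qint q (m + 1) * qS2 q n (m + 1)

/-- `A_q(p,r,n) = ∑_{ℓ=0}^p q^{C(ℓ,2)+ℓ-1} S_q(p,ℓ) [ℓ]_q! C(n+r-1, r-1)_q⁻¹ C(r+ℓ-1, ℓ)_q C(r+n, r+ℓ)_q`. -/
noncomputable def Aq (q : ℝ) (p r n : ℕ) : ℝ :=
  ∑ ℓ ∈ Finset.range (p + 1),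
    q ^ ((ℓ.choose 2 : ℤ) + (ℓ : ℤ) - 1) * qS2 q p ℓ * qfact q ℓ *
      (qbinom q (n + r - 1) (r - 1))⁻¹ * qbinom q (r + ℓ - 1) ℓ * qbinom q (r + n) (r + ℓ)

/-- `B_q(p,r,n) = ∑_{ℓ=0}^p (q^{C(ℓ,2)+r+2ℓ-2}/[r+ℓ]_q) S_q(p,ℓ) [ℓ]_q! C(r+ℓ-1, ℓ)_q C(r+n-1, r+ℓ)_q`. -/
noncomputable def Bq (q : ℝ) (p r n : ℕ) : ℝ :=
  ∑ ℓ ∈ Finset.range (p + 1),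
    q ^ ((ℓ.choose 2 : ℤ) + (r : ℤ) + 2 * (ℓ : ℤ) - 2) / qint q (r + ℓ) * qS2 q p ℓ * qfact q ℓ *
      qbinom q (r + ℓ - 1) ℓ * qbinom q (r + n - 1) (r + ℓ)

/-- The `q`-unsigned Stirling numbers of the first kind, defined by
`s_{uq}(n+1, k) = [n]_q s_{uq}(n, k) + q^n s_{uq}(n, k-1)` with
`s_{uq}(0,0) = 1` and `s_{uq}(0,k) = 0` for `k ≥ 1`. -/
noncomputable def qS1 (q : ℝ) : ℕ → ℕ → ℝ
  | 0, 0 => 1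
  | 0, _ + 1 => 0
  | n + 1, 0 => qint q n * qS1 q n 0
  | n + 1, k + 1 => qint q n * qS1 q n (k + 1) + q ^ n * qS1 q n k

/-- The rising `q`-factorial `[ℓ]_q^{(p)} = [ℓ]_q [ℓ+1]_q ⋯ [ℓ+p-1]_q`. -/
noncomputable def qrise (q : ℝ) (ℓ p : ℕ) : ℝ := ∏ i ∈ Finset.range p, qint q (ℓ + i)

/-!
Expanding `[ℓ]_q^{(p)}` in powers of `[ℓ]_q` (the `q`-Stirling numbers of the first kind) and each
power in the falling factorials `q^{C(k,2)} [ℓ]_q [ℓ-1]_q ⋯ [ℓ-k+1]_q` (second kind) reduces the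
sum to `∑_ℓ q^{ℓ-1} [ℓ]_q [ℓ-1]_q ⋯ [ℓ-k+1]_q H_ℓ^{(s+1)}(q)`. Thanks to the closed form
`H_n^{(s+1)}(q) = C(s+n,s)_q (h_{s+n} - h_s)` with `h_n = H_n^{(1)}(q)`, this sum is evaluated by
telescoping in `n`; both increments reduce to the `q`-Pascal rule, the absorption identity
`C(N+1,K+1)_q / [N+1]_q = C(N,K)_q / [K+1]_q` and `C(N,a+b)_q C(a+b,b)_q = C(N,a)_q C(N-a,b)_q`.
-/

open Finset

variable {q : ℝ}

section QInt

lemma qint_zero : qint q 0 = 0 := by simp [qint]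

lemma qint_eq_geom_sum (hq1 : q ≠ 1) (n : ℕ) : qint q n = ∑ i ∈ range n, q ^ i := by
  rw [geom_sum_eq hq1, qint, ← neg_div_neg_eq, neg_sub, neg_sub]

lemma qint_pos (hq : 0 < q) (hq1 : q ≠ 1) {n : ℕ} (hn : n ≠ 0) : 0 < qint q n := by
  rw [qint_eq_geom_sum hq1]
  exact geom_sum_pos hq.le hn

lemma qint_ne_zero (hq : 0 < q) (hq1 : q ≠ 1) {n : ℕ} (hn : n ≠ 0) : qint q n ≠ 0 :=
  (qint_pos hq hq1 hn).ne'

lemma qint_add (hq1 : q ≠ 1) (a b : ℕ) : qint q (a + b) = qint q a + q ^ a * qint q b := by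
  have : 1 - q ≠ 0 := sub_ne_zero.mpr hq1.symm
  simp only [qint, pow_add]
  field_simp
  ring

lemma qfact_zero : qfact q 0 = 1 := rfl

lemma qfact_succ (n : ℕ) : qfact q (n + 1) = qint q (n + 1) * qfact q n := rfl

lemma qfact_ne_zero (hq : 0 < q) (hq1 : q ≠ 1) (n : ℕ) : qfact q n ≠ 0 := by
  induction n with
  | zero => exact one_ne_zero
  | succ n ih => exact mul_ne_zero (qint_ne_zero hq hq1 n.succ_ne_zero) ih

end QInt

section QBinom

lemma qbinom_of_add_eq {n k d : ℕ} (h : k + d = n) :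
    qbinom q n k = qfact q n / (qfact q k * qfact q d) := by
  rw [qbinom, if_pos (by omega), show n - k = d by omega]

lemma qbinom_of_lt {n k : ℕ} (h : n < k) : qbinom q n k = 0 := if_neg (by omega)

lemma qbinom_zero_right (hq : 0 < q) (hq1 : q ≠ 1) (n : ℕ) : qbinom q n 0 = 1 := by
  rw [qbinom_of_add_eq (zero_add n)]
  simp [qfact_zero, qfact_ne_zero hq hq1 n]

lemma qbinom_self (hq : 0 < q) (hq1 : q ≠ 1) (n : ℕ) : qbinom q n n = 1 := by
  rw [qbinom_of_add_eq (add_zero n)]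
  simp [qfact_zero, qfact_ne_zero hq hq1 n]

lemma qbinom_ne_zero (hq : 0 < q) (hq1 : q ≠ 1) {n k : ℕ} (h : k ≤ n) : qbinom q n k ≠ 0 := by
  rw [qbinom_of_add_eq (Nat.add_sub_cancel' h)]
  simp [qfact_ne_zero hq hq1]

lemma qbinom_succ_succ (hq : 0 < q) (hq1 : q ≠ 1) (N K : ℕ) :
    qbinom q (N + 1) (K + 1) = qbinom q N (K + 1) + q ^ (N - K) * qbinom q N K := by
  rcases lt_trichotomy K N with hKN | rfl | hNK
  · obtain ⟨d, rfl⟩ := Nat.exists_eq_add_of_lt hKN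
    have hsplit := qint_add (q := q) hq1 (d + 1) (K + 1)
    rw [show d + 1 + (K + 1) = K + d + 1 + 1 by omega] at hsplit
    rw [qbinom_of_add_eq (show K + 1 + (d + 1) = K + d + 1 + 1 by omega),
      qbinom_of_add_eq (show K + 1 + d = K + d + 1 by omega),
      qbinom_of_add_eq (show K + (d + 1) = K + d + 1 by omega),
      show K + d + 1 - K = d + 1 by omega, qfact_succ (K + d + 1), hsplit, qfact_succ K,
      qfact_succ d]
    have := qint_ne_zero hq hq1 (Nat.succ_ne_zero K)
    have := qint_ne_zero hq hq1 (Nat.succ_ne_zero d)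
    have := qfact_ne_zero hq hq1 K
    have := qfact_ne_zero hq hq1 d
    field_simp
  · rw [qbinom_of_lt (Nat.lt_succ_self K), Nat.sub_self, pow_zero, qbinom_self hq hq1,
      qbinom_self hq hq1, zero_add, one_mul]
  · rw [qbinom_of_lt hNK, qbinom_of_lt (by omega), qbinom_of_lt (by omega)]
    simp

lemma qbinom_succ_succ_div (hq : 0 < q) (hq1 : q ≠ 1) (N K : ℕ) :
    qbinom q (N + 1) (K + 1) / qint q (N + 1) = qbinom q N K / qint q (K + 1) := by
  rcases le_or_gt K N with hKN | hNK
  · obtain ⟨d, rfl⟩ := Nat.exists_eq_add_of_le hKN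
    rw [qbinom_of_add_eq (show K + 1 + d = K + d + 1 by omega), qbinom_of_add_eq rfl,
      qfact_succ (K + d), qfact_succ K]
    have := qint_ne_zero hq hq1 (Nat.succ_ne_zero K)
    have := qint_ne_zero hq hq1 (Nat.succ_ne_zero (K + d))
    have := qfact_ne_zero hq hq1 K
    have := qfact_ne_zero hq hq1 d
    field_simp
  · rw [qbinom_of_lt hNK, qbinom_of_lt (by omega)]
    simp

lemma qbinom_mul_qbinom (hq : 0 < q) (hq1 : q ≠ 1) (N a b : ℕ) :
    qbinom q N (a + b) * qbinom q (a + b) b = qbinom q N a * qbinom q (N - a) b := by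
  by_cases hab : a + b ≤ N
  · obtain ⟨d, rfl⟩ := Nat.exists_eq_add_of_le hab
    rw [show a + b + d - a = b + d by omega, qbinom_of_add_eq rfl,
      qbinom_of_add_eq (add_comm b a), qbinom_of_add_eq (show a + (b + d) = a + b + d by omega),
      qbinom_of_add_eq rfl]
    have := qfact_ne_zero hq hq1 (a + b)
    have := qfact_ne_zero hq hq1 (b + d)
    field_simp
  · rw [qbinom_of_lt (by omega)]
    rcases le_or_gt a N with haN | hNa
    · rw [qbinom_of_lt (n := N - a) (by omega)]
      simp
    · rw [qbinom_of_lt hNa]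
      simp

end QBinom

section QFall

noncomputable def qfall (q : ℝ) (ℓ k : ℕ) : ℝ := ∏ i ∈ range k, qint q (ℓ - i)

lemma qfall_succ (ℓ k : ℕ) : qfall q ℓ (k + 1) = qfall q ℓ k * qint q (ℓ - k) :=
  prod_range_succ _ _

lemma qfall_of_lt {ℓ k : ℕ} (h : ℓ < k) : qfall q ℓ k = 0 :=
  prod_eq_zero (mem_range.mpr h) (by simp [qint_zero])

lemma qfall_eq_qfact_mul_qbinom (hq : 0 < q) (hq1 : q ≠ 1) (ℓ k : ℕ) :
    qfall q ℓ k = qfact q k * qbinom q ℓ k := by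
  induction k with
  | zero => simp [qfall, qfact_zero, qbinom_zero_right hq hq1]
  | succ k ih =>
    rcases le_or_gt ℓ k with hℓk | hkℓ
    · rw [qfall_of_lt (by omega), qbinom_of_lt (by omega), mul_zero]
    obtain ⟨d, rfl⟩ := Nat.exists_eq_add_of_lt hkℓ
    rw [qfall_succ, ih, qbinom_of_add_eq (show k + (d + 1) = k + d + 1 by omega),
      qbinom_of_add_eq (show k + 1 + d = k + d + 1 by omega), show k + d + 1 - k = d + 1 by omega,
      qfact_succ k, qfact_succ d]
    have := qint_ne_zero hq hq1 (Nat.succ_ne_zero k)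
    have := qint_ne_zero hq hq1 (Nat.succ_ne_zero d)
    field_simp

lemma qint_mul_qfall (hq1 : q ≠ 1) (ℓ k : ℕ) :
    qint q ℓ * qfall q ℓ k = q ^ k * qfall q ℓ (k + 1) + qint q k * qfall q ℓ k := by
  rcases le_or_gt k ℓ with h | h
  · rw [qfall_succ, ← Nat.add_sub_cancel' h, qint_add hq1 k (ℓ - k), Nat.add_sub_cancel_left]
    ring
  · rw [qfall_succ, qfall_of_lt h]
    ring

end QFall

section QHyp

noncomputable def qharm (q : ℝ) (n : ℕ) : ℝ := ∑ j ∈ Icc 1 n, q ^ (j - 1) / qint q j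

lemma qharm_succ (n : ℕ) : qharm q (n + 1) = qharm q n + q ^ n / qint q (n + 1) := by
  rw [qharm, qharm, sum_Icc_succ_top (by omega), Nat.add_sub_cancel]

lemma qhyp_one (hq : 0 < q) (n : ℕ) : qhyp q 1 n = qharm q n := by
  refine sum_congr rfl fun j hj => ?_
  obtain ⟨i, rfl⟩ := Nat.exists_eq_add_of_le' (mem_Icc.mp hj).1
  rw [qhyp, Nat.add_sub_cancel, pow_succ]
  field_simp [hq.ne']

lemma qhyp_succ_zero (r : ℕ) : qhyp q (r + 1) 0 = 0 := by simp [qhyp]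

lemma qhyp_succ_succ (r n : ℕ) :
    qhyp q (r + 1) (n + 1) = qhyp q (r + 1) n + q ^ (n + 1) * qhyp q r (n + 1) :=
  sum_Icc_succ_top (by omega) _

theorem qhyp_succ_eq_qbinom_mul_qharm_sub (hq : 0 < q) (hq1 : q ≠ 1) (s n : ℕ) :
    qhyp q (s + 1) n = qbinom q (s + n) s * (qharm q (s + n) - qharm q s) := by
  induction s generalizing n with
  | zero => simp [qhyp_one hq, qbinom_zero_right hq hq1, qharm]
  | succ s ih =>
    induction n with
    | zero => simp [qhyp_succ_zero]
    | succ n ihn =>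
      have hpascal := qbinom_succ_succ hq hq1 (s + n + 1) s
      have habsorb := qbinom_succ_succ_div hq hq1 (s + n + 1) s
      rw [show s + n + 1 - s = n + 1 by omega] at hpascal
      rw [qhyp_succ_succ, ihn, ih, show s + 1 + (n + 1) = s + n + 1 + 1 by omega,
        show s + 1 + n = s + n + 1 by omega, show s + (n + 1) = s + n + 1 by omega]
      linear_combination (qharm q (s + 1) - qharm q (s + n + 1)) * hpascal
        - qbinom q (s + n + 1 + 1) (s + 1) * qharm_succ (q := q) (s + n + 1)
        + q ^ (n + 1) * qbinom q (s + n + 1) s * qharm_succ (q := q) s - q ^ (s + n + 1) * habsorb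

end QHyp

section FallSum

noncomputable def qfallHypA (q : ℝ) (k s n : ℕ) : ℝ :=
  q ^ k / q * qfact q k * qbinom q (s + k) k * qbinom q (s + n + 1) (s + k + 1)

noncomputable def qfallHypB (q : ℝ) (k s n : ℕ) : ℝ :=
  q ^ (s + 2 * k) / q / qint q (s + k + 1) * qfact q k * qbinom q (s + k) k *
    qbinom q (s + n) (s + k + 1)

lemma qfallHypA_succ_sub (hq : 0 < q) (hq1 : q ≠ 1) (k s n : ℕ) :
    qfallHypA q k s (n + 1) - qfallHypA q k s n =
      q ^ n * qfall q (n + 1) k * qbinom q (s + n + 1) s := by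
  have hsub := qbinom_mul_qbinom hq hq1 (s + n + 1) s k
  rw [show s + n + 1 - s = n + 1 by omega] at hsub
  rw [qfallHypA, qfallHypA, show s + (n + 1) + 1 = s + n + 1 + 1 by omega,
    qbinom_succ_succ hq hq1 (s + n + 1) (s + k), qfall_eq_qfact_mul_qbinom hq hq1]
  by_cases hk : k ≤ n + 1
  · have hpow : q ^ k / q * q ^ (s + n + 1 - (s + k)) = q ^ n := by
      rw [show s + n + 1 - (s + k) = n + 1 - k by omega, mul_comm, div_eq_mul_inv,
        ← mul_assoc, pow_sub_mul_pow q hk, pow_succ, mul_inv_cancel_right₀ hq.ne']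
    linear_combination (q ^ n * qfact q k) * hsub + qfact q k * qbinom q (s + k) k *
      qbinom q (s + n + 1) (s + k) * hpow
  · rw [qbinom_of_lt (n := n + 1) (by omega), qbinom_of_lt (n := s + n + 1) (k := s + k) (by omega)]
    ring

lemma qfallHypA_mul_eq_qfallHypB_succ_sub (hq : 0 < q) (hq1 : q ≠ 1) (k s n : ℕ) :
    qfallHypA q k s n * (q ^ (s + n) / qint q (s + n + 1)) =
      qfallHypB q k s (n + 1) - qfallHypB q k s n := by
  have hpascal := qbinom_succ_succ hq hq1 (s + n) (s + k)
  have habsorb := qbinom_succ_succ_div hq hq1 (s + n) (s + k)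
  rw [qfallHypA, qfallHypB, qfallHypB, show s + (n + 1) = s + n + 1 by omega]
  by_cases hk : k ≤ n
  · obtain ⟨d, rfl⟩ := Nat.exists_eq_add_of_le hk
    rw [show s + (k + d) - (s + k) = d by omega] at hpascal
    linear_combination (-(q ^ (s + 2 * k) / q / qint q (s + k + 1) * qfact q k *
        qbinom q (s + k) k)) * hpascal +
      (q ^ k / q * qfact q k * qbinom q (s + k) k * q ^ (s + (k + d))) * habsorb
  · rw [qbinom_of_lt (n := s + n + 1) (k := s + k + 1) (by omega),
      qbinom_of_lt (n := s + n) (k := s + k + 1) (by omega)]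
    ring

theorem sum_qpow_qfall_mul_qhyp (hq : 0 < q) (hq1 : q ≠ 1) (k s n : ℕ) :
    ∑ ℓ ∈ Icc 1 n, q ^ (ℓ - 1) * qfall q ℓ k * qhyp q (s + 1) ℓ =
      qfallHypA q k s n * (qharm q (s + n) - qharm q s) - qfallHypB q k s n := by
  induction n with
  | zero => simp [qfallHypB, qbinom_of_lt]
  | succ n ih =>
    rw [sum_Icc_succ_top (by omega), ih, Nat.add_sub_cancel,
      qhyp_succ_eq_qbinom_mul_qharm_sub hq hq1, ← add_assoc, qharm_succ]
    linear_combination (qharm q s - qharm q (s + n) - q ^ (s + n) / qint q (s + n + 1)) *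
        qfallHypA_succ_sub hq hq1 k s n - qfallHypA_mul_eq_qfallHypB_succ_sub hq hq1 k s n

end FallSum

section Stirling

lemma sum_range_succ_shift {M : Type*} [AddCommMonoid M] (f : ℕ → M) (n : ℕ) (h0 : f 0 = 0)
    (hn : f (n + 1) = 0) : ∑ k ∈ range (n + 1), f (k + 1) = ∑ k ∈ range (n + 1), f k := by
  rw [← add_zero (∑ k ∈ range (n + 1), f (k + 1)), ← h0, ← sum_range_succ', sum_range_succ, hn,
    add_zero]

lemma qS2_eq_zero_of_lt {m k : ℕ} (h : m < k) : qS2 q m k = 0 := by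
  induction m generalizing k with
  | zero => obtain ⟨k, rfl⟩ := Nat.exists_eq_add_of_lt h; rfl
  | succ m ih =>
    obtain ⟨k, rfl⟩ := Nat.exists_eq_add_of_lt h
    rw [qS2, ih (by omega), ih (by omega), mul_zero, add_zero]

lemma qS1_eq_zero_of_lt {p k : ℕ} (h : p < k) : qS1 q p k = 0 := by
  induction p generalizing k with
  | zero => obtain ⟨k, rfl⟩ := Nat.exists_eq_add_of_lt h; rfl
  | succ p ih =>
    obtain ⟨k, rfl⟩ := Nat.exists_eq_add_of_lt h
    rw [qS1, ih (by omega), ih (by omega), mul_zero, mul_zero, add_zero]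

lemma qS1_succ_zero (p : ℕ) : qS1 q (p + 1) 0 = 0 := by
  induction p with
  | zero => rw [qS1, qint_zero, zero_mul]
  | succ p ih => rw [qS1, ih, mul_zero]

theorem qint_pow_eq_sum_qS2_mul_qfall (hq1 : q ≠ 1) (ℓ m : ℕ) :
    qint q ℓ ^ m = ∑ k ∈ range (m + 1), qS2 q m k * (q ^ k.choose 2 * qfall q ℓ k) := by
  induction m with
  | zero => simp [qS2, qfall]
  | succ m ih =>
    set g : ℕ → ℝ := fun k => q ^ k.choose 2 * qfall q ℓ k
    have hg (k : ℕ) : qint q ℓ * g k = g (k + 1) + qint q k * g k := by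
      simp only [g, Nat.choose_succ_succ', Nat.choose_one_right, pow_add]
      linear_combination q ^ k.choose 2 * qint_mul_qfall hq1 ℓ k
    have hshift : ∑ k ∈ range (m + 1), qint q (k + 1) * qS2 q m (k + 1) * g (k + 1) =
        ∑ k ∈ range (m + 1), qint q k * qS2 q m k * g k :=
      sum_range_succ_shift (fun k => qint q k * qS2 q m k * g k) m
        (by rw [qint_zero, zero_mul, zero_mul])
        (by rw [qS2_eq_zero_of_lt (by omega), mul_zero, zero_mul])
    calc qint q ℓ ^ (m + 1)
        = ∑ k ∈ range (m + 1), (qS2 q m k * g (k + 1) + qint q k * qS2 q m k * g k) := by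
          rw [pow_succ', ih, mul_sum]
          exact sum_congr rfl fun k _ => by linear_combination qS2 q m k * hg k
      _ = ∑ k ∈ range (m + 1), qS2 q (m + 1) (k + 1) * g (k + 1) := by
          rw [sum_add_distrib, ← hshift, ← sum_add_distrib]
          exact sum_congr rfl fun k _ => by rw [qS2]; ring
      _ = ∑ k ∈ range (m + 2), qS2 q (m + 1) k * g k := by
          rw [sum_range_succ' _ (m + 1), qS2, zero_mul, add_zero]

theorem qrise_eq_sum_qS1_mul_qint_pow (hq1 : q ≠ 1) (ℓ p : ℕ) :
    qrise q ℓ p = ∑ m ∈ range (p + 1), qS1 q p m * qint q ℓ ^ m := by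
  induction p with
  | zero => simp [qrise, qS1]
  | succ p ih =>
    set x := qint q ℓ
    have hshift : ∑ m ∈ range (p + 1), qS1 q p (m + 1) * x ^ (m + 1) + qS1 q p 0 =
        ∑ m ∈ range (p + 1), qS1 q p m * x ^ m := by
      rw [← mul_one (qS1 q p 0), ← pow_zero x, ← sum_range_succ' (fun m => qS1 q p m * x ^ m),
        sum_range_succ, qS1_eq_zero_of_lt (Nat.lt_succ_self p), zero_mul, add_zero]
    symm
    calc ∑ m ∈ range (p + 2), qS1 q (p + 1) m * x ^ m
        = ∑ m ∈ range (p + 1), (qint q p * (qS1 q p (m + 1) * x ^ (m + 1)) +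
            q ^ p * x * (qS1 q p m * x ^ m)) + qint q p * qS1 q p 0 := by
          rw [sum_range_succ' _ (p + 1), qS1, pow_zero, mul_one]
          exact congrArg (· + _) (sum_congr rfl fun m _ => by rw [qS1]; ring)
      _ = qint q p * ∑ m ∈ range (p + 1), qS1 q p m * x ^ m +
            q ^ p * x * ∑ m ∈ range (p + 1), qS1 q p m * x ^ m := by
          rw [sum_add_distrib, ← mul_sum, ← mul_sum, ← hshift]
          ring
      _ = qrise q ℓ (p + 1) := by
          rw [← add_mul, ← ih, ← qint_add hq1, add_comm p ℓ, qrise, qrise, prod_range_succ,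
            mul_comm]

theorem qrise_succ_eq_sum_Icc_qS1_mul_qint_pow (hq1 : q ≠ 1) (ℓ p : ℕ) :
    qrise q ℓ (p + 1) = ∑ m ∈ Icc 1 (p + 1), qS1 q (p + 1) m * qint q ℓ ^ m := by
  rw [qrise_eq_sum_qS1_mul_qint_pow hq1, sum_range_succ', qS1_succ_zero, zero_mul, add_zero,
    ← Ico_add_one_right_eq_Icc, sum_Ico_eq_sum_range, Nat.add_sub_cancel]
  exact sum_congr rfl fun m _ => by rw [add_comm 1 m]

end Stirling

theorem sum_qpow_qint_pow_mul_qhyp (hq : 0 < q) (hq1 : q ≠ 1) (m s n : ℕ) :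
    ∑ ℓ ∈ Icc 1 n, q ^ (ℓ - 1) * qint q ℓ ^ m * qhyp q (s + 1) ℓ =
      Aq q m (s + 1) n * qhyp q (s + 1) n - Bq q m (s + 1) n := by
  calc ∑ ℓ ∈ Icc 1 n, q ^ (ℓ - 1) * qint q ℓ ^ m * qhyp q (s + 1) ℓ
      = ∑ k ∈ range (m + 1), qS2 q m k * q ^ k.choose 2 *
          ∑ ℓ ∈ Icc 1 n, q ^ (ℓ - 1) * qfall q ℓ k * qhyp q (s + 1) ℓ := by
        simp_rw [qint_pow_eq_sum_qS2_mul_qfall hq1, mul_sum, sum_mul]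
        rw [sum_comm]
        exact sum_congr rfl fun k _ => sum_congr rfl fun ℓ _ => by ring
    _ = ∑ k ∈ range (m + 1), qS2 q m k * q ^ k.choose 2 *
          (qfallHypA q k s n * (qharm q (s + n) - qharm q s) - qfallHypB q k s n) := by
        simp_rw [sum_qpow_qfall_mul_qhyp hq hq1]
    _ = Aq q m (s + 1) n * qhyp q (s + 1) n - Bq q m (s + 1) n := by
        rw [qhyp_succ_eq_qbinom_mul_qharm_sub hq hq1, Aq, Bq, sum_mul, ← sum_sub_distrib]
        refine sum_congr rfl fun k _ => ?_
        have hq0 : q ≠ 0 := hq.ne'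
        have hbinom : qbinom q (s + n) s ≠ 0 := qbinom_ne_zero hq hq1 (Nat.le_add_right s n)
        rw [show n + (s + 1) - 1 = s + n by omega, show s + 1 - 1 = s by omega,
          show s + 1 + k - 1 = s + k by omega, show s + 1 + n - 1 = s + n by omega,
          show s + 1 + n = s + n + 1 by omega, show s + 1 + k = s + k + 1 by omega,
          show (k.choose 2 : ℤ) + k - 1 = ((k.choose 2 + k : ℕ) : ℤ) - 1 by push_cast; ring,
          show (k.choose 2 : ℤ) + ((s + 1 : ℕ) : ℤ) + 2 * k - 2 =
            ((k.choose 2 + (s + 2 * k) : ℕ) : ℤ) - 1 by push_cast; ring,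
          zpow_sub_one₀ hq0, zpow_sub_one₀ hq0, zpow_natCast, zpow_natCast, qfallHypA, qfallHypB]
        field_simp
        ring

theorem sum_qpow_qrise_mul_qhyp_general (q : ℝ) (hq : 0 < q) (hq1 : q ≠ 1) (n p r : ℕ)
    (hp : 1 ≤ p) (hr : 1 ≤ r) :
    ∑ ℓ ∈ Finset.Icc 1 n, q ^ (ℓ - 1) * qrise q ℓ p * qhyp q r ℓ =
      (∑ m ∈ Finset.Icc 1 p, qS1 q p m * Aq q m r n) * qhyp q r n -
        ∑ m ∈ Finset.Icc 1 p, qS1 q p m * Bq q m r n := by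
  obtain ⟨s, rfl⟩ := Nat.exists_eq_add_of_le' hr
  obtain ⟨p, rfl⟩ := Nat.exists_eq_add_of_le' hp
  calc ∑ ℓ ∈ Icc 1 n, q ^ (ℓ - 1) * qrise q ℓ (p + 1) * qhyp q (s + 1) ℓ
      = ∑ m ∈ Icc 1 (p + 1), qS1 q (p + 1) m *
          ∑ ℓ ∈ Icc 1 n, q ^ (ℓ - 1) * qint q ℓ ^ m * qhyp q (s + 1) ℓ := by
        simp_rw [qrise_succ_eq_sum_Icc_qS1_mul_qint_pow hq1, mul_sum, sum_mul]
        rw [sum_comm]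
        exact sum_congr rfl fun m _ => sum_congr rfl fun ℓ _ => by ring
    _ = _ := by
        simp_rw [sum_qpow_qint_pow_mul_qhyp hq hq1, mul_sub, sum_sub_distrib, sum_mul, mul_assoc]

/-- For `q > 0`, `q ≠ 1` and positive integers `n, p, r`,
`∑_{ℓ=1}^n q^{ℓ-1} [ℓ]_q^{(p)} H_ℓ^{(r)}(q)
   = (∑_{m=1}^p s_{uq}(p,m) A_q(m,r,n)) H_n^{(r)}(q) - ∑_{m=1}^p s_{uq}(p,m) B_q(m,r,n)`. -/
theorem sum_qpow_qrise_mul_qhyp (q : ℝ) (hq : 0 < q) (hq1 : q ≠ 1) (n p r : ℕ)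
    (hn : 1 ≤ n) (hp : 1 ≤ p) (hr : 1 ≤ r) :
    ∑ ℓ ∈ Finset.Icc 1 n, q ^ (ℓ - 1) * qrise q ℓ p * qhyp q r ℓ =
      (∑ m ∈ Finset.Icc 1 p, qS1 q p m * Aq q m r n) * qhyp q r n -
        ∑ m ∈ Finset.Icc 1 p, qS1 q p m * Bq q m r n :=
  sum_qpow_qrise_mul_qhyp_general q hq hq1 n p r hp hr
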